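/- arXiv:2112.03178 — 2 statements merged into one kernel-verified Lean document; each statement's English description precedes it below -/
import Mathlib

section
/- Blackwell-style key inequality for regret-matching: with the setup of regret-matching (cumulative regrets R^t(a), policy proportional to positive regrets), the sum of squared positive regrets satisfies ∑_a ([R^{t+1}(a)]^+)² ≤ ∑_a ([R^t(a)]^+)² + ∑_a (r^{t+1}(a) − π^{t+1}·r^{t+1})², where π^{t+1} is the regret-matching policy computed from R^t. -/
/-!
The positive part is monotone and `(x + d)⁺ ≤ x⁺ + d`, so squaring gives
`((x + d)⁺)² ≤ (x⁺)² + 2 x⁺ d + d²`. Summed over actions, the cross term is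
`2 ∑ₐ [R(a)]⁺ (r(a) - π·r)`, which vanishes for the regret-matching policy: when
`∑ [R]⁺ > 0` the policy is the normalized vector of positive regrets, and otherwise
every positive regret is zero.
-/

open Finset

lemma max_add_zero_sq_le (x d : ℝ) :
    max (x + d) 0 ^ 2 ≤ max x 0 ^ 2 + 2 * max x 0 * d + d ^ 2 := by
  have hx : x ≤ max x 0 := le_max_left x 0
  rcases le_or_gt (x + d) 0 with h | h
  · rw [max_eq_right h]
    nlinarith [sq_nonneg (max x 0 + d)]
  · rw [max_eq_left h.le]
    nlinarith

section

variable {ι : Type*} [Fintype ι]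

lemma sum_max_add_zero_sq_le (R d : ι → ℝ) :
    ∑ a, max (R a + d a) 0 ^ 2 ≤
      ∑ a, max (R a) 0 ^ 2 + 2 * ∑ a, max (R a) 0 * d a + ∑ a, d a ^ 2 := by
  calc ∑ a, max (R a + d a) 0 ^ 2
      ≤ ∑ a, (max (R a) 0 ^ 2 + 2 * max (R a) 0 * d a + d a ^ 2) :=
        sum_le_sum fun a _ => max_add_zero_sq_le (R a) (d a)
    _ = _ := by simp only [sum_add_distrib, mul_sum, mul_assoc]

lemma sum_mul_sub_normalized_mean_eq_zero (w r : ι → ℝ) (hw : ∑ b, w b ≠ 0) :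
    ∑ a, w a * (r a - ∑ b, w b / (∑ c, w c) * r b) = 0 := by
  simp only [mul_sub, sum_sub_distrib, ← sum_mul, div_mul_eq_mul_div, ← sum_div]
  field_simp
  ring

lemma sum_max_zero_mul_regret_eq_zero (R r π : ι → ℝ)
    (hπ : 0 < ∑ b, max (R b) 0 → ∀ a, π a = max (R a) 0 / ∑ b, max (R b) 0) :
    ∑ a, max (R a) 0 * (r a - ∑ b, π b * r b) = 0 := by
  by_cases hS : 0 < ∑ b, max (R b) 0
  · simp only [hπ hS]
    exact sum_mul_sub_normalized_mean_eq_zero _ r hS.ne'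
  · have hnonneg : ∀ b ∈ univ, 0 ≤ max (R b) 0 := fun b _ => le_max_right (R b) 0
    have hsum : ∑ b, max (R b) 0 = 0 := le_antisymm (not_lt.mp hS) (sum_nonneg hnonneg)
    have hzero : ∀ a, max (R a) 0 = 0 := fun a =>
      (sum_eq_zero_iff_of_nonneg hnonneg).mp hsum a (mem_univ a)
    simp [hzero]

end

theorem regret_matching_potential_general (A : ℕ)
    (R r π R' : Fin A → ℝ)
    (hπ : ∀ a, π a =
      if 0 < ∑ b, max (R b) 0
      then max (R a) 0 / ∑ b, max (R b) 0
      else 1 / (A : ℝ))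
    (hR' : ∀ a, R' a = R a + (r a - ∑ b, π b * r b)) :
    ∑ a, (max (R' a) 0) ^ 2 ≤
      ∑ a, (max (R a) 0) ^ 2 + ∑ a, (r a - ∑ b, π b * r b) ^ 2 := by
  have hcross : ∑ a, max (R a) 0 * (r a - ∑ b, π b * r b) = 0 :=
    sum_max_zero_mul_regret_eq_zero R r π fun hS a => by rw [hπ a, if_pos hS]
  simpa only [hR', hcross, mul_zero, add_zero] using
    sum_max_add_zero_sq_le R fun a => r a - ∑ b, π b * r b

/-- Blackwell-style key inequality for regret matching: the sum of squared
positive cumulative regrets grows by at most the sum of squared instantaneous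
regrets, when the policy is the regret-matching policy computed from the
current cumulative regrets. -/
theorem regret_matching_potential (A : ℕ) (hA : 0 < A)
    (R r π R' : Fin A → ℝ)
    (hπ : ∀ a, π a =
      if 0 < ∑ b, max (R b) 0
      then max (R a) 0 / ∑ b, max (R b) 0
      else 1 / (A : ℝ))
    (hR' : ∀ a, R' a = R a + (r a - ∑ b, π b * r b)) :
    ∑ a, (max (R' a) 0) ^ 2 ≤
      ∑ a, (max (R a) 0) ^ 2 + ∑ a, (r a - ∑ b, π b * r b) ^ 2 :=
  regret_matching_potential_general A R r π R' hπ hR'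
end

section
/- Regret-matching-plus regret bound: define Q^0(a) = 0 and Q^t(a) = [Q^{t-1}(a) + r^t(a) − π^t·r^t]^+ where π^t(a) = Q^{t-1}(a)/∑_b Q^{t-1}(b) (uniform if the denominator is zero). If each reward vector satisfies max_a r^t(a) − min_a r^t(a) ≤ U, then after T rounds the external regret max_a ∑_{t=1}^T (r^t(a) − π^t·r^t) ≤ max_a Q^T(a) ≤ U √(A T), where A is the number of actions. -/
/-- Regret-matching⁺ bound: the external regret of every action is bounded by
Q^T(a), which in turn is at most U √(A T). -/
theorem regret_matching_plus_bound (A : ℕ) (hA : 0 < A) (U : ℝ) (T : ℕ)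
    (r π Q : ℕ → Fin A → ℝ)
    (hrange : ∀ t a b, r t a - r t b ≤ U)
    (hQ0 : ∀ a, Q 0 a = 0)
    (hQ : ∀ t a, Q (t + 1) a = max (Q t a + (r t a - ∑ b, π t b * r t b)) 0)
    (hπ : ∀ t a, π t a =
      if 0 < ∑ b, Q t b
      then Q t a / ∑ b, Q t b
      else 1 / (A : ℝ)) :
    ∀ a, (∑ t ∈ Finset.range T, (r t a - ∑ b, π t b * r t b) ≤ Q T a) ∧
      Q T a ≤ U * Real.sqrt ((A : ℝ) * T) := by
  have a0 : Fin A := ⟨0, hA⟩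
  have hU : 0 ≤ U := by have := hrange 0 a0 a0; linarith
  -- Q is nonnegative
  have hQnn : ∀ t a, 0 ≤ Q t a := by
    intro t a
    cases t with
    | zero => rw [hQ0]
    | succ n => rw [hQ]; exact le_max_right _ _
  -- π is nonnegative and sums to 1
  have hπnn : ∀ t a, 0 ≤ π t a := by
    intro t a
    rw [hπ]
    split
    · exact div_nonneg (hQnn t a) (le_of_lt ‹_›)
    · positivity
  have hπsum : ∀ t, ∑ b, π t b = 1 := by
    intro t
    by_cases h : 0 < ∑ b, Q t b
    · have : ∑ b, π t b = (∑ b, Q t b) / (∑ b, Q t b) := by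
        rw [Finset.sum_div]
        exact Finset.sum_congr rfl fun b _ => by rw [hπ]; simp [h]
      rw [this, div_self (ne_of_gt h)]
    · have : ∑ b, π t b = ∑ _b : Fin A, 1 / (A : ℝ) := by
        exact Finset.sum_congr rfl fun b _ => by rw [hπ]; simp [h]
      rw [this, Finset.sum_const]
      simp
      field_simp
  -- bound on instantaneous regret
  have hΔ : ∀ t a, |r t a - ∑ b, π t b * r t b| ≤ U := by
    intro t a
    have key : r t a - ∑ b, π t b * r t b = ∑ b, π t b * (r t a - r t b) := by
      rw [Finset.sum_congr rfl fun b _ => mul_sub (π t b) (r t a) (r t b)]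
      rw [Finset.sum_sub_distrib, ← Finset.sum_mul, hπsum, one_mul]
    rw [key, abs_le]
    constructor
    · have h0 : ∑ b, π t b * (-U) ≤ ∑ b, π t b * (r t a - r t b) :=
        Finset.sum_le_sum fun b _ => mul_le_mul_of_nonneg_left
          (by have := hrange t b a; linarith) (hπnn t b)
      rw [← Finset.sum_mul, hπsum, one_mul] at h0
      exact h0
    · calc ∑ b, π t b * (r t a - r t b) ≤ ∑ b, π t b * U := by
            apply Finset.sum_le_sum
            intro b _
            exact mul_le_mul_of_nonneg_left (hrange t a b) (hπnn t b)
        _ = U := by rw [← Finset.sum_mul, hπsum, one_mul]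
  -- key zero-inner-product property
  have hkey : ∀ t, ∑ a, Q t a * (r t a - ∑ b, π t b * r t b) = 0 := by
    intro t
    by_cases h : 0 < ∑ b, Q t b
    · have hπe : ∀ a, π t a = Q t a / ∑ b, Q t b := fun a => by rw [hπ]; simp [h]
      have hQe : ∀ a, Q t a = π t a * ∑ b, Q t b := by
        intro a; rw [hπe]; field_simp
      calc ∑ a, Q t a * (r t a - ∑ b, π t b * r t b)
          = ∑ a, ((π t a * ∑ b, Q t b) * (r t a - ∑ b, π t b * r t b)) :=
            Finset.sum_congr rfl fun a _ => by rw [← hQe a]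
        _ = ∑ a, ((∑ b, Q t b) * (π t a * r t a)
              - ((∑ b, Q t b) * (∑ b, π t b * r t b)) * π t a) :=
            Finset.sum_congr rfl fun a _ => by ring
        _ = (∑ b, Q t b) * (∑ a, π t a * r t a)
              - ((∑ b, Q t b) * (∑ b, π t b * r t b)) * (∑ a, π t a) := by
            rw [Finset.sum_sub_distrib, ← Finset.mul_sum, ← Finset.mul_sum]
        _ = 0 := by rw [hπsum, mul_one, sub_self]
    · have hz : ∀ a, Q t a = 0 := by
        intro a
        have hle : ∑ b, Q t b ≤ 0 := not_lt.mp h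
        have := Finset.sum_nonneg (fun b (_ : b ∈ Finset.univ) => hQnn t b)
        have hs0 : ∑ b, Q t b = 0 := le_antisymm hle this
        exact (Finset.sum_eq_zero_iff_of_nonneg
          (fun b _ => hQnn t b)).mp hs0 a (Finset.mem_univ a)
      simp [hz]
  -- sum of squares recursion
  have hsq : ∀ t, ∑ a, (Q t a)^2 ≤ t * ((A : ℝ) * U^2) := by
    intro t
    induction t with
    | zero => simp [hQ0]
    | succ n ih =>
      have step : ∑ a, (Q (n+1) a)^2 ≤ ∑ a, (Q n a)^2 + (A : ℝ) * U^2 := by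
        have h1 : ∀ a, (Q (n+1) a)^2 ≤ (Q n a + (r n a - ∑ b, π n b * r n b))^2 := by
          intro a
          rw [hQ]
          rcases le_or_gt 0 (Q n a + (r n a - ∑ b, π n b * r n b)) with h | h
          · rw [max_eq_left h]
          · rw [max_eq_right (le_of_lt h)]; simpa using sq_nonneg _
        calc ∑ a, (Q (n+1) a)^2 ≤ ∑ a, (Q n a + (r n a - ∑ b, π n b * r n b))^2 :=
              Finset.sum_le_sum fun a _ => h1 a
          _ = ∑ a, ((Q n a)^2 + 2 * (Q n a * (r n a - ∑ b, π n b * r n b))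
                + (r n a - ∑ b, π n b * r n b)^2) :=
              Finset.sum_congr rfl fun a _ => by ring
          _ = ∑ a, (Q n a)^2 + 2 * (∑ a, Q n a * (r n a - ∑ b, π n b * r n b))
                + ∑ a, (r n a - ∑ b, π n b * r n b)^2 := by
              rw [Finset.sum_add_distrib, Finset.sum_add_distrib, Finset.mul_sum]
          _ ≤ ∑ a, (Q n a)^2 + 0 + (A : ℝ) * U^2 := by
              rw [hkey n]
              have : ∑ a, (r n a - ∑ b, π n b * r n b)^2 ≤ ∑ _a : Fin A, U^2 := by
                apply Finset.sum_le_sum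
                intro a _
                have := hΔ n a
                nlinarith [abs_nonneg (r n a - ∑ b, π n b * r n b),
                  sq_abs (r n a - ∑ b, π n b * r n b)]
              simp only [Finset.sum_const, Finset.card_univ, Fintype.card_fin,
                nsmul_eq_mul] at this
              linarith
          _ = ∑ a, (Q n a)^2 + (A : ℝ) * U^2 := by ring
      calc ∑ a, (Q (n+1) a)^2 ≤ ∑ a, (Q n a)^2 + (A : ℝ) * U^2 := step
        _ ≤ n * ((A : ℝ) * U^2) + (A : ℝ) * U^2 := by linarith
        _ = (n + 1 : ℕ) * ((A : ℝ) * U^2) := by push_cast; ring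
  intro a
  constructor
  · -- regret bound by Q
    induction T with
    | zero => simp [hQ0]
    | succ n ih =>
      rw [Finset.sum_range_succ, hQ]
      have := le_max_left (Q n a + (r n a - ∑ b, π n b * r n b)) 0
      linarith
  · -- Q T a ≤ U * sqrt(A T)
    have h1 : (Q T a)^2 ≤ T * ((A : ℝ) * U^2) := by
      have : (Q T a)^2 ≤ ∑ b, (Q T b)^2 :=
        Finset.single_le_sum (fun b _ => sq_nonneg (Q T b)) (Finset.mem_univ a)
      linarith [hsq T]
    have h2 : U * Real.sqrt ((A : ℝ) * T) = Real.sqrt (T * ((A : ℝ) * U^2)) := by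
      rw [show (T : ℝ) * ((A : ℝ) * U^2) = U^2 * ((A : ℝ) * T) by ring,
        Real.sqrt_mul (sq_nonneg U), Real.sqrt_sq hU]
    rw [h2]
    calc Q T a = Real.sqrt ((Q T a)^2) := (Real.sqrt_sq (hQnn T a)).symm
      _ ≤ Real.sqrt (T * ((A : ℝ) * U^2)) := Real.sqrt_le_sqrt h1
end
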